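/- Let W̄_λ(s) = 1/((s-2)(s² + s - 5)). For all ω ∈ ℝ, Re W̄_λ(jω) > -1/8; hence the Nyquist diagram of W̄_λ lies strictly to the right of the line Re(s) = -1/8 and outside the disk D(k_I, 0) for every k_I ∈ (-8, 0). -/
import Mathlib

/-- The Nyquist diagram of W̄_λ(s) = 1/((s-2)(s² + s - 5)) lies strictly to the right of
the line Re(s) = -1/8: Re W̄_λ(jω) > -1/8 for all real ω. -/
theorem nyquist_right_of_line_integrator :
    ∀ ω : ℝ,
      (-1 / 8 : ℝ) <
        ((1 : ℂ) /
          ((Complex.I * ω - 2) * ((Complex.I * ω) ^ 2 + Complex.I * ω - 5))).re := by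
  intro ω
  set z : ℂ := (Complex.I * ω - 2) * ((Complex.I * ω) ^ 2 + Complex.I * ω - 5) with hz
  have hre : z.re = ω ^ 2 + 10 := by
    simp [hz, Complex.mul_re, Complex.mul_im, Complex.I_re, Complex.I_im,
      mul_pow, Complex.I_sq, ← Complex.ofReal_pow]
    ring
  have h : ((1 : ℂ) / z).re = z.re / Complex.normSq z := by
    simp [Complex.div_re, Complex.normSq_apply, div_eq_mul_inv]
  rw [h, hre]
  have hnum : (0:ℝ) ≤ ω ^ 2 + 10 := by positivity
  have hden : (0:ℝ) ≤ Complex.normSq z := Complex.normSq_nonneg z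
  have := div_nonneg hnum hden
  linarith
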